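/- arXiv:1711.02297 — 3 statements merged into one kernel-verified Lean document; each statement's English description precedes it below -/
import Mathlib

section
/- Let K be a ranked partially ordered set of rank n with a least face and a greatest face in which every chain is contained in a flag (a maximal chain with n+2 elements). Then K is strongly connected if and only if K is strongly flag-connected. -/
open Set Pointwise

/-- `Φ` is a flag of the subset `s` of the poset `α`: a chain contained in `s`
that is maximal among chains contained in `s`. -/
def IsFlagOf {α : Type*} [PartialOrder α] (s Φ : Set α) : Prop :=
  Φ ⊆ s ∧ IsChain (· ≤ ·) Φ ∧
    ∀ Ψ : Set α, Ψ ⊆ s → IsChain (· ≤ ·) Ψ → Φ ⊆ Ψ → Ψ = Φ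

/-- Two flags are adjacent if each differs from the other in exactly one face. -/
def FlagAdj {α : Type*} [PartialOrder α] (Φ Ψ : Set α) : Prop :=
  (Φ \ Ψ).ncard = 1 ∧ (Ψ \ Φ).ncard = 1

/-- The set `s` is flag-connected: any two flags of `s` are joined by a sequence
of successively adjacent flags of `s`. -/
def FlagConnIn {α : Type*} [PartialOrder α] (s : Set α) : Prop :=
  ∀ Φ Ψ : Set α, IsFlagOf s Φ → IsFlagOf s Ψ →
    Relation.ReflTransGen
      (fun A B => IsFlagOf s A ∧ IsFlagOf s B ∧ FlagAdj A B) Φ Ψ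

/-- The section between `F` and `G` is connected: any two of its proper faces are
joined by a finite sequence of successively incident proper faces of the section. -/
def ConnIn {α : Type*} [PartialOrder α] (F G : α) : Prop :=
  ∀ H K : α, F < H → H < G → F < K → K < G →
    Relation.ReflTransGen
      (fun a b => F < a ∧ a < G ∧ F < b ∧ b < G ∧ (a ≤ b ∨ b ≤ a)) H K

/-- An incidence complex of rank `n`: a bounded ranked poset (rank function `rk`
with range `{-1,…,n}`, strictly monotone, all flags having `n+2` elements hitting
every rank), strongly connected (I3), and with at least two `i`-faces between any
incident pair of faces of ranks `i-1` and `i+1` (I4). -/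
structure IncComplex (α : Type*) [PartialOrder α] [BoundedOrder α]
    (n : ℤ) (rk : α → ℤ) : Prop where
  rk_bot : rk (⊥ : α) = -1
  rk_top : rk (⊤ : α) = n
  rk_strictMono : ∀ a b : α, a < b → rk a < rk b
  chain_flag : ∀ c : Set α, IsChain (· ≤ ·) c →
    ∃ Φ : Set α, c ⊆ Φ ∧ IsFlagOf Set.univ Φ ∧ Φ.ncard = (n + 2).toNat
  flag_rk : ∀ Φ : Set α, IsFlagOf Set.univ Φ →
    ∀ i ∈ Set.Icc (-1 : ℤ) n, ∃ a ∈ Φ, rk a = i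
  strong_conn : ∀ F G : α, F ≤ G → 2 ≤ rk G - rk F - 1 → ConnIn F G
  two_between : ∀ F G : α, F < G → rk G = rk F + 2 →
    ∃ H H' : α, H ≠ H' ∧ F < H ∧ H < G ∧ F < H' ∧ H' < G

/-- A complex is regular if its automorphism group acts transitively on flags. -/
def IsRegularIC (α : Type*) [PartialOrder α] : Prop :=
  ∀ Φ Ψ : Set α, IsFlagOf Set.univ Φ → IsFlagOf Set.univ Ψ →
    ∃ g : α ≃o α, ⇑g '' Φ = Ψ

/-- `Γ` is a flag-transitive subgroup of the automorphism group. -/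
def FlagTrans {α : Type*} [PartialOrder α] (Γ : Subgroup (α ≃o α)) : Prop :=
  ∀ Φ Ψ : Set α, IsFlagOf Set.univ Φ → IsFlagOf Set.univ Ψ →
    ∃ g ∈ Γ, ⇑g '' Φ = Ψ

/-- The distinguished generating subset `R_i`: the stabilizer in `Γ` of
`Φ \ {F_i}`, where `F` enumerates the base flag by rank. -/
def Rset {α : Type*} [PartialOrder α] (Γ : Subgroup (α ≃o α)) (F : ℤ → α)
    (n i : ℤ) : Set (α ≃o α) :=
  {g | g ∈ Γ ∧ ∀ j ∈ Set.Icc (-1 : ℤ) n, j ≠ i → g (F j) = F j}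

/-!
Both directions compare incidence paths of proper faces with paths of adjacent flags.
If `rk G - rk F ≥ 3`, every flag of `[F, G]` has two proper faces, so adjacent flags share a
proper face and the faces met along a path of flags form an incidence path.
Conversely, by induction on `rk G - rk F`: flags through a common proper face `H` are joined
inside the smaller sections `[F, H]` and `[H, G]`, so an incidence path between proper faces lifts,
one incident pair at a time, to a path of flags; when `rk G - rk F ≤ 2` two flags differ in at
most one face.
-/

open Relation

section

variable {α : Type*} [PartialOrder α] {s c Φ Ψ A B T : Set α} {F G H a b : α}

theorem IsChain.le_of_apply_le {β : Type*} [Preorder β] {f : α → β} (hc : IsChain (· ≤ ·) c)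
    (hf : StrictMono f) (ha : a ∈ c) (hb : b ∈ c) (h : f a ≤ f b) : a ≤ b :=
  (hc.total ha hb).elim id fun hba =>
    hba.lt_or_eq.elim (fun hlt => absurd (hf hlt) h.not_gt) Eq.ge

theorem StrictMono.injOn_of_isChain {β : Type*} [Preorder β] {f : α → β} (hf : StrictMono f)
    (hc : IsChain (· ≤ ·) c) : InjOn f c := fun _ ha _ hb h =>
  le_antisymm (hc.le_of_apply_le hf ha hb h.le) (hc.le_of_apply_le hf hb ha h.ge)

theorem mem_Ioo_of_apply_mem_Ioo {β : Type*} [Preorder β] (f : α → β) (ha : a ∈ Icc F G)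
    (h : f a ∈ Ioo (f F) (f G)) : a ∈ Ioo F G :=
  ⟨ha.1.lt_of_ne (ne_of_apply_ne f h.1.ne), ha.2.lt_of_ne (ne_of_apply_ne f h.2.ne)⟩

-- the step relations of `FlagConnIn` and `ConnIn`, which unfold to `ReflTransGen` of these
def FlagAdjIn (s A B : Set α) : Prop :=
  IsFlagOf s A ∧ IsFlagOf s B ∧ FlagAdj A B

def IncidentIn (F G a b : α) : Prop :=
  F < a ∧ a < G ∧ F < b ∧ b < G ∧ (a ≤ b ∨ b ≤ a)

theorem IsFlagOf.eq_of_subset (hΦ : IsFlagOf s Φ) (hΨ : IsFlagOf s Ψ) (h : Φ ⊆ Ψ) : Φ = Ψ :=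
  (hΦ.2.2 Ψ hΨ.1 hΨ.2.1 h).symm

theorem IsFlagOf.mem_of_forall_comparable (hΦ : IsFlagOf s Φ) (ha : a ∈ s)
    (hcomp : ∀ b ∈ Φ, a ≤ b ∨ b ≤ a) : a ∈ Φ := by
  have hchain : IsChain (· ≤ ·) (insert a Φ) := hΦ.2.1.insert fun b hb _ => hcomp b hb
  rw [← hΦ.2.2 _ (insert_subset ha hΦ.1) hchain (subset_insert a Φ)]
  exact mem_insert a Φ

theorem IsFlagOf.left_mem (hΦ : IsFlagOf (Icc F G) Φ) (hFG : F ≤ G) : F ∈ Φ :=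
  hΦ.mem_of_forall_comparable ⟨le_rfl, hFG⟩ fun _ hb => .inl (hΦ.1 hb).1

theorem IsFlagOf.right_mem (hΦ : IsFlagOf (Icc F G) Φ) (hFG : F ≤ G) : G ∈ Φ :=
  hΦ.mem_of_forall_comparable ⟨hFG, le_rfl⟩ fun _ hb => .inr (hΦ.1 hb).2

theorem IsFlagOf.inter_Icc (hΦ : IsFlagOf s Φ) (hF : F ∈ Φ) (hG : G ∈ Φ) :
    IsFlagOf (s ∩ Icc F G) (Φ ∩ Icc F G) := by
  refine ⟨inter_subset_inter_left _ hΦ.1, hΦ.2.1.mono inter_subset_left, ?_⟩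
  intro Ψ hΨs hΨ hsub
  -- a face of `Φ` outside `[F, G]` lies below `F` or above `G`, hence is comparable with `Ψ`
  have hcross : ∀ x ∈ Ψ, ∀ y ∈ Φ, x ≠ y → x ≤ y ∨ y ≤ x := by
    intro x hx y hy hxy
    obtain ⟨-, hFx, hxG⟩ := hΨs hx
    rcases hΦ.2.1.total hy hF with hyF | hFy
    · exact .inr (hyF.trans hFx)
    rcases hΦ.2.1.total hy hG with hyG | hGy
    · exact hΨ hx (hsub ⟨hy, hFy, hyG⟩) hxy
    · exact .inl (hxG.trans hGy)
  have hunion : Ψ ∪ Φ = Φ :=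
    hΦ.2.2 _ (union_subset (hΨs.trans inter_subset_left) hΦ.1)
      (isChain_union.2 ⟨hΨ, hΦ.2.1, hcross⟩) subset_union_right
  exact subset_antisymm (subset_inter (hunion ▸ subset_union_left) fun x hx => (hΨs hx).2) hsub

theorem IsFlagOf.inter_Icc_left (hΦ : IsFlagOf (Icc F G) Φ) (hH : H ∈ Φ) :
    IsFlagOf (Icc F H) (Φ ∩ Icc F H) := by
  have hFH := (hΦ.1 hH).1
  have := hΦ.inter_Icc (hΦ.left_mem (hFH.trans (hΦ.1 hH).2)) hH
  rwa [inter_eq_right.2 (Icc_subset_Icc_right (hΦ.1 hH).2)] at this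

theorem IsFlagOf.inter_Icc_right (hΦ : IsFlagOf (Icc F G) Φ) (hH : H ∈ Φ) :
    IsFlagOf (Icc H G) (Φ ∩ Icc H G) := by
  have := hΦ.inter_Icc hH (hΦ.right_mem ((hΦ.1 hH).1.trans (hΦ.1 hH).2))
  rwa [inter_eq_right.2 (Icc_subset_Icc_left (hΦ.1 hH).1)] at this

theorem IsFlagOf.inter_Icc_union_inter_Icc (hΦ : IsFlagOf (Icc F G) Φ) (hH : H ∈ Φ) :
    Φ ∩ Icc F H ∪ Φ ∩ Icc H G = Φ := by
  refine subset_antisymm (union_subset inter_subset_left inter_subset_left) fun x hx => ?_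
  rcases hΦ.2.1.total hx hH with hxH | hHx
  · exact .inl ⟨hx, (hΦ.1 hx).1, hxH⟩
  · exact .inr ⟨hx, hHx, (hΦ.1 hx).2⟩

theorem IsFlagOf.union (hFH : F ≤ H) (hHG : H ≤ G) (hA : IsFlagOf (Icc F H) A)
    (hB : IsFlagOf (Icc H G) B) : IsFlagOf (Icc F G) (A ∪ B) := by
  have hH : H ∈ A ∪ B := .inl (hA.right_mem hFH)
  refine ⟨union_subset (hA.1.trans (Icc_subset_Icc_right hHG))
      (hB.1.trans (Icc_subset_Icc_left hFH)),
    isChain_union.2 ⟨hA.2.1, hB.2.1, fun x hx y hy _ => .inl ((hA.1 hx).2.trans (hB.1 hy).1)⟩,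
    fun Ψ hΨs hΨ hsub => subset_antisymm (fun x hx => ?_) hsub⟩
  have hlow : Ψ ∩ Icc F H = A := hA.2.2 _ inter_subset_right (hΨ.mono inter_subset_left)
    (subset_inter (subset_union_left.trans hsub) hA.1)
  have hup : Ψ ∩ Icc H G = B := hB.2.2 _ inter_subset_right (hΨ.mono inter_subset_left)
    (subset_inter (subset_union_right.trans hsub) hB.1)
  rcases hΨ.total hx (hsub hH) with hxH | hHx
  · exact .inl (hlow ▸ ⟨hx, (hΨs hx).1, hxH⟩)
  · exact .inr (hup ▸ ⟨hx, hHx, (hΨs hx).2⟩)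

theorem exists_isFlagOf_Icc_superset
    (hext : ∀ c : Set α, IsChain (· ≤ ·) c → ∃ Φ, c ⊆ Φ ∧ IsFlagOf univ Φ)
    {c : Set α} (hc : IsChain (· ≤ ·) c) (hcs : c ⊆ Icc F G) (hFG : F ≤ G) :
    ∃ Ξ, IsFlagOf (Icc F G) Ξ ∧ c ⊆ Ξ := by
  have hchain : IsChain (· ≤ ·) (insert F (insert G c)) :=
    (hc.insert fun b hb _ => .inr (hcs hb).2).insert fun b hb _ =>
      .inl (hb.elim (· ▸ hFG) fun hb => (hcs hb).1)
  obtain ⟨Φ, hsub, hΦ⟩ := hext _ hchain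
  have hflag := hΦ.inter_Icc (hsub (mem_insert _ _)) (hsub (mem_insert_of_mem _ (mem_insert _ _)))
  rw [univ_inter] at hflag
  exact ⟨_, hflag, subset_inter (fun x hx => hsub (.inr (.inr hx))) hcs⟩

theorem FlagAdj.union_right (h : FlagAdj A B) (hA : A ∩ T ⊆ B) (hB : B ∩ T ⊆ A) :
    FlagAdj (A ∪ T) (B ∪ T) := by
  have key : ∀ {X Y : Set α}, X ∩ T ⊆ Y → (X ∪ T) \ (Y ∪ T) = X \ Y := fun hXY => by
    ext x
    have := @hXY x
    simp only [mem_sdiff, mem_union, mem_inter_iff] at this ⊢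
    tauto
  exact ⟨key hA ▸ h.1, key hB ▸ h.2⟩

theorem FlagAdj.union_left (h : FlagAdj A B) (hA : A ∩ T ⊆ B) (hB : B ∩ T ⊆ A) :
    FlagAdj (T ∪ A) (T ∪ B) := by
  rw [union_comm T, union_comm T]
  exact h.union_right hA hB

theorem FlagAdj.mem_or_mem (h : FlagAdj A B) (ha : a ∈ A) (hb : b ∈ A) (hab : a ≠ b) :
    a ∈ B ∨ b ∈ B := by
  obtain ⟨d, hd⟩ := ncard_eq_one.1 h.1
  by_contra! hnot
  have had : a ∈ A \ B := ⟨ha, hnot.1⟩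
  have hbd : b ∈ A \ B := ⟨hb, hnot.2⟩
  rw [hd] at had hbd
  exact hab (had.trans hbd.symm)

theorem FlagAdjIn.union_Icc_right (hFH : F ≤ H) (hHG : H ≤ G) (h : FlagAdjIn (Icc F H) A B)
    (hT : IsFlagOf (Icc H G) T) : FlagAdjIn (Icc F G) (A ∪ T) (B ∪ T) := by
  obtain ⟨hA, hB, hAB⟩ := h
  -- `A` and `T` only meet in `H`, which lies in `B` (and symmetrically)
  refine ⟨hA.union hFH hHG hT, hB.union hFH hHG hT, hAB.union_right ?_ ?_⟩
  · rintro x ⟨hxA, hxT⟩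
    exact le_antisymm (hA.1 hxA).2 (hT.1 hxT).1 ▸ hB.right_mem hFH
  · rintro x ⟨hxB, hxT⟩
    exact le_antisymm (hB.1 hxB).2 (hT.1 hxT).1 ▸ hA.right_mem hFH

theorem FlagAdjIn.union_Icc_left (hFH : F ≤ H) (hHG : H ≤ G) (hT : IsFlagOf (Icc F H) T)
    (h : FlagAdjIn (Icc H G) A B) : FlagAdjIn (Icc F G) (T ∪ A) (T ∪ B) := by
  obtain ⟨hA, hB, hAB⟩ := h
  refine ⟨hT.union hFH hHG hA, hT.union hFH hHG hB, hAB.union_left ?_ ?_⟩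
  · rintro x ⟨hxA, hxT⟩
    exact le_antisymm (hT.1 hxT).2 (hA.1 hxA).1 ▸ hB.left_mem hHG
  · rintro x ⟨hxB, hxT⟩
    exact le_antisymm (hT.1 hxT).2 (hB.1 hxB).1 ▸ hA.left_mem hHG

theorem reflTransGen_flagAdjIn_of_subsingleton_diff (hΦ : IsFlagOf s Φ) (hΨ : IsFlagOf s Ψ)
    (hΦΨ : (Φ \ Ψ).Subsingleton) (hΨΦ : (Ψ \ Φ).Subsingleton) :
    ReflTransGen (FlagAdjIn s) Φ Ψ := by
  rcases hΦΨ.eq_empty_or_singleton with hempty | ⟨a, ha⟩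
  · rw [hΦ.eq_of_subset hΨ (sdiff_eq_empty.1 hempty)]
  rcases hΨΦ.eq_empty_or_singleton with hempty' | ⟨b, hb⟩
  · rw [hΨ.eq_of_subset hΦ (sdiff_eq_empty.1 hempty'), sdiff_self] at ha
    exact absurd ha (singleton_ne_empty a).symm
  exact .single ⟨hΦ, hΨ, by rw [ha, ncard_singleton], by rw [hb, ncard_singleton]⟩

theorem reflTransGen_flagAdjIn_of_mem (hlow : FlagConnIn (Icc F H))
    (hup : FlagConnIn (Icc H G)) (hΦ : IsFlagOf (Icc F G) Φ) (hΨ : IsFlagOf (Icc F G) Ψ)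
    (hHΦ : H ∈ Φ) (hHΨ : H ∈ Ψ) : ReflTransGen (FlagAdjIn (Icc F G)) Φ Ψ := by
  obtain ⟨hFH, hHG⟩ := hΦ.1 hHΦ
  have hlowPath : ReflTransGen (FlagAdjIn (Icc F G))
      (Φ ∩ Icc F H ∪ Φ ∩ Icc H G) (Ψ ∩ Icc F H ∪ Φ ∩ Icc H G) :=
    ReflTransGen.lift (· ∪ Φ ∩ Icc H G)
      (fun _ _ h => FlagAdjIn.union_Icc_right hFH hHG h (hΦ.inter_Icc_right hHΦ)) _ _
      (hlow _ _ (hΦ.inter_Icc_left hHΦ) (hΨ.inter_Icc_left hHΨ))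
  have hupPath : ReflTransGen (FlagAdjIn (Icc F G))
      (Ψ ∩ Icc F H ∪ Φ ∩ Icc H G) (Ψ ∩ Icc F H ∪ Ψ ∩ Icc H G) :=
    ReflTransGen.lift (Ψ ∩ Icc F H ∪ ·)
      (fun _ _ h => FlagAdjIn.union_Icc_left hFH hHG (hΨ.inter_Icc_left hHΨ) h) _ _
      (hup _ _ (hΦ.inter_Icc_right hHΦ) (hΨ.inter_Icc_right hHΨ))
  simp only [hΦ.inter_Icc_union_inter_Icc hHΦ, hΨ.inter_Icc_union_inter_Icc hHΨ] at hlowPath hupPath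
  exact hlowPath.trans hupPath

theorem reflTransGen_flagAdjIn_of_reflTransGen_incidentIn (hFG : F ≤ G)
    (hext : ∀ c : Set α, IsChain (· ≤ ·) c → ∃ Φ, c ⊆ Φ ∧ IsFlagOf univ Φ)
    (hshare : ∀ H, F < H → H < G → ∀ Φ Ψ, IsFlagOf (Icc F G) Φ → IsFlagOf (Icc F G) Ψ →
      H ∈ Φ → H ∈ Ψ → ReflTransGen (FlagAdjIn (Icc F G)) Φ Ψ)
    {K : α} (hFH : F < H) (hHG : H < G) (hHK : ReflTransGen (IncidentIn F G) H K)
    (hΦ : IsFlagOf (Icc F G) Φ) (hHΦ : H ∈ Φ) (hΨ : IsFlagOf (Icc F G) Ψ) (hKΨ : K ∈ Ψ) :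
    ReflTransGen (FlagAdjIn (Icc F G)) Φ Ψ := by
  induction hHK generalizing Ψ with
  | refl => exact hshare H hFH hHG Φ Ψ hΦ hΨ hHΦ hKΨ
  | @tail b c _ hbc ih =>
    obtain ⟨hFb, hbG, hFc, hcG, hcomp⟩ := hbc
    obtain ⟨Ξ, hΞ, hbcΞ⟩ := exists_isFlagOf_Icc_superset hext
      (hcomp.elim IsChain.pair fun h => pair_comm c b ▸ IsChain.pair h)
      (pair_subset ⟨hFb.le, hbG.le⟩ ⟨hFc.le, hcG.le⟩) hFG
    exact (ih hΞ (hbcΞ (.inl rfl))).trans (hshare c hFc hcG Ξ Ψ hΞ hΨ (hbcΞ (.inr rfl)) hKΨ)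

theorem IsFlagOf.exists_mem_rk_eq [BoundedOrder α] {rk : α → ℤ} {n : ℤ} (hrk : StrictMono rk)
    (rk_bot : rk ⊥ = -1) (rk_top : rk ⊤ = n)
    (hext : ∀ c : Set α, IsChain (· ≤ ·) c → ∃ Φ, c ⊆ Φ ∧ IsFlagOf univ Φ)
    (flag_rk : ∀ Φ : Set α, IsFlagOf univ Φ → ∀ i ∈ Icc (-1 : ℤ) n, ∃ a ∈ Φ, rk a = i)
    (hΨ : IsFlagOf (Icc F G) Ψ) (hFG : F ≤ G) :
    ∀ i ∈ Icc (rk F) (rk G), ∃ a ∈ Ψ, rk a = i := by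
  intro i hi
  obtain ⟨Φ, hΨΦ, hΦ⟩ := hext Ψ hΨ.2.1
  have hF := hΨΦ (hΨ.left_mem hFG)
  have hG := hΨΦ (hΨ.right_mem hFG)
  have hΦΨ : Φ ∩ Icc F G = Ψ := by
    have hflag := hΦ.inter_Icc hF hG
    rw [univ_inter] at hflag
    exact (hΨ.eq_of_subset hflag (subset_inter hΨΦ hΨ.1)).symm
  obtain ⟨a, ha, rfl⟩ := flag_rk Φ hΦ i
    ⟨rk_bot ▸ (hrk.monotone bot_le).trans hi.1, rk_top ▸ hi.2.trans (hrk.monotone le_top)⟩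
  exact ⟨a, hΦΨ ▸ ⟨ha, hΦ.2.1.le_of_apply_le hrk hF ha hi.1,
    hΦ.2.1.le_of_apply_le hrk ha hG hi.2⟩, rfl⟩

theorem flagConnIn_Icc_of_rk_le_add_two {rk : α → ℤ} (hrk : StrictMono rk) (hFG : F ≤ G)
    (h : rk G ≤ rk F + 2) : FlagConnIn (Icc F G) := by
  -- a face of one flag missing from another is neither `F` nor `G`, so has rank `rk F + 1`
  have hsub : ∀ {X Y}, IsFlagOf (Icc F G) X → IsFlagOf (Icc F G) Y → (X \ Y).Subsingleton := by
    intro X Y hX hY a ha b hb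
    have hrank : ∀ x ∈ X \ Y, rk x = rk F + 1 := by
      rintro x ⟨hxX, hxY⟩
      have hFx : F < x := (hX.1 hxX).1.lt_of_ne (by rintro rfl; exact hxY (hY.left_mem hFG))
      have hxG : x < G := (hX.1 hxX).2.lt_of_ne (by rintro rfl; exact hxY (hY.right_mem hFG))
      have := hrk hFx
      have := hrk hxG
      omega
    exact hrk.injOn_of_isChain hX.2.1 ha.1 hb.1 ((hrank a ha).trans (hrank b hb).symm)
  exact fun Φ Ψ hΦ hΨ =>
    reflTransGen_flagAdjIn_of_subsingleton_diff hΦ hΨ (hsub hΦ hΨ) (hsub hΨ hΦ)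

theorem flagConnIn_Icc_of_connIn {rk : α → ℤ} (hrk : StrictMono rk)
    (hext : ∀ c : Set α, IsChain (· ≤ ·) c → ∃ Φ, c ⊆ Φ ∧ IsFlagOf univ Φ)
    (hrank : ∀ {F G : α} {Ψ : Set α}, IsFlagOf (Icc F G) Ψ → F ≤ G →
      ∀ i ∈ Icc (rk F) (rk G), ∃ a ∈ Ψ, rk a = i)
    (hconn : ∀ F G : α, F ≤ G → rk G - rk F - 1 ≤ 1 ∨ ConnIn F G) (hFG : F ≤ G) :
    FlagConnIn (Icc F G) := by
  induction hk : (rk G - rk F).toNat using Nat.strong_induction_on generalizing F G with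
  | _ k ih =>
  rcases le_or_gt (rk G) (rk F + 2) with hsmall | hlarge
  · exact flagConnIn_Icc_of_rk_le_add_two hrk hFG hsmall
  have hshare : ∀ H, F < H → H < G → ∀ Φ Ψ, IsFlagOf (Icc F G) Φ → IsFlagOf (Icc F G) Ψ →
      H ∈ Φ → H ∈ Ψ → ReflTransGen (FlagAdjIn (Icc F G)) Φ Ψ :=
    fun H hFH hHG _ _ hΦ hΨ => reflTransGen_flagAdjIn_of_mem
      (ih _ (by have := hrk hHG; omega) hFH.le rfl) (ih _ (by have := hrk hFH; omega) hHG.le rfl)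
      hΦ hΨ
  intro Φ Ψ hΦ hΨ
  obtain ⟨H, hHΦ, hH⟩ := hrank hΦ hFG (rk F + 1) ⟨by omega, by omega⟩
  obtain ⟨K, hKΨ, hK⟩ := hrank hΨ hFG (rk F + 1) ⟨by omega, by omega⟩
  obtain ⟨hFH, hHG⟩ := mem_Ioo_of_apply_mem_Ioo rk (hΦ.1 hHΦ) ⟨by omega, by omega⟩
  obtain ⟨hFK, hKG⟩ := mem_Ioo_of_apply_mem_Ioo rk (hΨ.1 hKΨ) ⟨by omega, by omega⟩
  exact reflTransGen_flagAdjIn_of_reflTransGen_incidentIn hFG hext hshare hFH hHG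
    ((hconn F G hFG).resolve_left (by omega) H K hFH hHG hFK hKG) hΦ hHΦ hΨ hKΨ

theorem connIn_of_flagConnIn
    (hext : ∀ c : Set α, IsChain (· ≤ ·) c → ∃ Φ, c ⊆ Φ ∧ IsFlagOf univ Φ) (hFG : F ≤ G)
    (htwo : ∀ X, IsFlagOf (Icc F G) X → ∃ a ∈ X, ∃ b ∈ X, a ≠ b ∧ a ∈ Ioo F G ∧ b ∈ Ioo F G)
    (hfc : FlagConnIn (Icc F G)) : ConnIn F G := by
  intro H K hFH hHG hFK hKG
  obtain ⟨Φ, hΦ, hHΦ⟩ := exists_isFlagOf_Icc_superset hext IsChain.singleton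
    (singleton_subset_iff.2 ⟨hFH.le, hHG.le⟩) hFG
  obtain ⟨Ψ, hΨ, hKΨ⟩ := exists_isFlagOf_Icc_superset hext IsChain.singleton
    (singleton_subset_iff.2 ⟨hFK.le, hKG.le⟩) hFG
  have hreach : ∀ X, ReflTransGen (FlagAdjIn (Icc F G)) Φ X →
      ∀ a ∈ X, a ∈ Ioo F G → ReflTransGen (IncidentIn F G) H a := by
    intro X hX
    induction hX with
    | refl => exact fun a ha ⟨hFa, haG⟩ => .single ⟨hFH, hHG, hFa, haG, hΦ.2.1.total (hHΦ rfl) ha⟩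
    | tail _ hXY ih =>
      obtain ⟨hX, hY, hadj⟩ := hXY
      obtain ⟨a, ha, b, hb, hab, haI, hbI⟩ := htwo _ hX
      obtain ⟨c, hcX, hcY, hcI⟩ : ∃ c ∈ _, c ∈ _ ∧ c ∈ Ioo F G :=
        (hadj.mem_or_mem ha hb hab).elim (⟨a, ha, ·, haI⟩) (⟨b, hb, ·, hbI⟩)
      exact fun d hd ⟨hFd, hdG⟩ =>
        (ih c hcX hcI).tail ⟨hcI.1, hcI.2, hFd, hdG, hY.2.1.total hcY hd⟩
  exact hreach Ψ (hfc Φ Ψ hΦ hΨ) K (hKΨ rfl) ⟨hFK, hKG⟩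

end

/-- For a ranked bounded poset of rank `n` in which every chain is
contained in a flag (with `n+2` elements, one of each rank), strong connectedness
is equivalent to strong flag-connectedness. -/
theorem strongly_connected_iff_strongly_flag_connected
    {α : Type*} [PartialOrder α] [BoundedOrder α] (n : ℤ) (rk : α → ℤ)
    (rk_bot : rk (⊥ : α) = -1) (rk_top : rk (⊤ : α) = n)
    (rk_strictMono : ∀ a b : α, a < b → rk a < rk b)
    (chain_flag : ∀ c : Set α, IsChain (· ≤ ·) c →
      ∃ Φ : Set α, c ⊆ Φ ∧ IsFlagOf Set.univ Φ ∧ Φ.ncard = (n + 2).toNat)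
    (flag_rk : ∀ Φ : Set α, IsFlagOf Set.univ Φ →
      ∀ i ∈ Set.Icc (-1 : ℤ) n, ∃ a ∈ Φ, rk a = i) :
    (∀ F G : α, F ≤ G → (rk G - rk F - 1 ≤ 1 ∨ ConnIn F G)) ↔
      (∀ F G : α, F ≤ G → FlagConnIn (Set.Icc F G)) := by
  have hrk : StrictMono rk := fun a b => rk_strictMono a b
  have hext : ∀ c : Set α, IsChain (· ≤ ·) c → ∃ Φ, c ⊆ Φ ∧ IsFlagOf univ Φ :=
    fun c hc => (chain_flag c hc).imp fun _ h => ⟨h.1, h.2.1⟩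
  have hrank {F G : α} {Ψ : Set α} (hΨ : IsFlagOf (Icc F G) Ψ) (hFG : F ≤ G) :=
    hΨ.exists_mem_rk_eq hrk rk_bot rk_top hext flag_rk hFG
  refine ⟨fun hconn F G hFG => flagConnIn_Icc_of_connIn hrk hext hrank hconn hFG,
    fun hfc F G hFG => or_iff_not_imp_left.2 fun hlarge =>
      connIn_of_flagConnIn hext hFG (fun X hX => ?_) (hfc F G hFG)⟩
  obtain ⟨a, ha, hra⟩ := hrank hX hFG (rk F + 1) ⟨by omega, by omega⟩
  obtain ⟨b, hb, hrb⟩ := hrank hX hFG (rk F + 2) ⟨by omega, by omega⟩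
  exact ⟨a, ha, b, hb, by rintro rfl; omega,
    mem_Ioo_of_apply_mem_Ioo rk (hX.1 ha) ⟨by omega, by omega⟩,
    mem_Ioo_of_apply_mem_Ioo rk (hX.1 hb) ⟨by omega, by omega⟩⟩
end

section
/- Every section G/F of a regular incidence complex K, where F is an i-face and G a j-face with F ≤ G, is itself a regular incidence complex of rank j-i-1, and any two sections defined by pairs of faces of the same ranks are isomorphic. -/
open Set Pointwise

/-- The bounded order structure on a section `Set.Icc F G`. -/
def sectionBoundedOrder {α : Type*} [PartialOrder α] {F G : α} (h : F ≤ G) :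
    BoundedOrder ↥(Set.Icc F G) where
  top := ⟨G, ⟨h, le_rfl⟩⟩
  le_top x := x.2.2
  bot := ⟨F, ⟨le_rfl, h⟩⟩
  bot_le x := x.2.1

/-! Automorphisms of an incidence complex preserve ranks, since the rank of a face is
read off from the number of faces below it in any flag through it. Hence the automorphism
carrying a flag through `F, G` to a flag through `F', G'` maps `F ↦ F'` and `G ↦ G'`, and
restricts to an isomorphism `G/F ≃o G'/F'`. Every flag of `G/F` is the trace of a flag of the
whole complex through `F` and `G`, so the same restriction makes `G/F` flag-transitive, and the
axioms (I1)–(I4) pass to the section because its chains, flags and intervals are those of the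
complex. -/

theorem isFlagOf_univ_iff {α : Type*} [PartialOrder α] {Φ : Set α} :
    IsFlagOf univ Φ ↔ IsMaxChain (· ≤ ·) Φ :=
  ⟨fun ⟨_, hc, hmax⟩ => ⟨hc, fun Ψ hΨ hsub => (hmax Ψ (subset_univ _) hΨ hsub).symm⟩,
    fun ⟨hc, hmax⟩ => ⟨subset_univ _, hc, fun _ _ hΨ hsub => (hmax hΨ hsub).symm⟩⟩

theorem ConnIn.of_val {α : Type*} [PartialOrder α] {s : Set α} [s.OrdConnected] {a b : s}
    (h : ConnIn (a : α) b) : ConnIn a b := by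
  rintro ⟨H, hH⟩ ⟨K, hK⟩ haH hHb haK hKb
  classical
  -- A retraction onto `s` carries the path in `α`, which stays inside `s`, to a path in `s`.
  let r : α → s := fun x => if hx : x ∈ s then ⟨x, hx⟩ else a
  have hr : ∀ x (hx : x ∈ s), r x = ⟨x, hx⟩ := fun x hx => dif_pos hx
  have hs : ∀ x, (a : α) < x → x < b → x ∈ s := fun x hax hxb =>
    Set.OrdConnected.out ‹_› a.2 b.2 ⟨hax.le, hxb.le⟩
  rw [← hr H hH, ← hr K hK]
  refine (h H K haH hHb haK hKb).lift r fun x y ⟨hax, hxb, hay, hyb, hxy⟩ => ?_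
  dsimp only [Function.onFun]
  rw [hr x (hs x hax hxb), hr y (hs y hay hyb)]
  exact ⟨hax, hxb, hay, hyb, hxy⟩

def OrderIso.restrictIcc {α : Type*} [PartialOrder α] (g : α ≃o α) {F G F' G' : α}
    (hF : g F = F') (hG : g G = G') : Icc F G ≃o Icc F' G' where
  toFun x := ⟨g x, hF ▸ g.monotone x.2.1, hG ▸ g.monotone x.2.2⟩
  invFun x := ⟨g.symm x, g.le_symm_apply.2 (hF ▸ x.2.1), g.symm_apply_le.2 (hG ▸ x.2.2)⟩
  left_inv x := Subtype.ext (g.symm_apply_apply x)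
  right_inv x := Subtype.ext (g.apply_symm_apply x)
  map_rel_iff' := g.le_iff_le

theorem OrderIso.image_restrictIcc_preimage_val {α : Type*} [PartialOrder α] (g : α ≃o α)
    {F G F' G' : α} (hF : g F = F') (hG : g G = G') (Φ : Set α) :
    g.restrictIcc hF hG '' (Subtype.val ⁻¹' Φ) = Subtype.val ⁻¹' (g '' Φ) := by
  rw [OrderIso.image_eq_preimage_symm, OrderIso.image_eq_preimage_symm]
  rfl

theorem IsMaxChain.preimage_val_Icc {α : Type*} [PartialOrder α] {F G : α} {Φ : Set α}
    (hΦ : IsMaxChain (· ≤ ·) Φ) (hF : F ∈ Φ) (hG : G ∈ Φ) :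
    IsMaxChain (· ≤ ·) (Subtype.val ⁻¹' Φ : Set (Icc F G)) := by
  refine ⟨hΦ.1.preimage_relEmbedding (OrderEmbedding.subtype _), fun Ψ hΨ hsub => ?_⟩
  refine hsub.antisymm fun b hb => ?_
  -- `b` is comparable with every face of `Φ`: those outside `G/F` lie below `F` or above `G`.
  have hchain : IsChain (· ≤ ·) (insert b.1 Φ) := hΦ.1.insert fun x hx _ => by
    rcases hΦ.1.total hx hF with hxF | hFx
    · exact Or.inr (hxF.trans b.2.1)
    rcases hΦ.1.total hx hG with hxG | hGx
    · exact hΨ.total hb (hsub (a := ⟨x, hFx, hxG⟩) hx)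
    · exact Or.inl (b.2.2.trans hGx)
  exact (hΦ.2 hchain (subset_insert _ _)).symm ▸ mem_insert _ _

namespace IncComplex

variable {α : Type*} [PartialOrder α] [BoundedOrder α] {n : ℤ} {rk : α → ℤ}
  (hK : IncComplex α n rk)
include hK

theorem strictMono : StrictMono rk := hK.rk_strictMono

theorem rk_mem_Icc (a : α) : rk a ∈ Icc (-1) n :=
  ⟨hK.rk_bot ▸ hK.strictMono.monotone bot_le, hK.rk_top ▸ hK.strictMono.monotone le_top⟩

theorem le_of_rk_le_of_isChain {c : Set α} (hc : IsChain (· ≤ ·) c) {a b : α}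
    (ha : a ∈ c) (hb : b ∈ c) (hab : rk a ≤ rk b) : a ≤ b := by
  rcases hc.total ha hb with h | h
  · exact h
  rcases h.eq_or_lt with rfl | hlt
  · exact le_rfl
  · exact absurd (hK.strictMono hlt) hab.not_gt

theorem injOn_rk_of_isChain {c : Set α} (hc : IsChain (· ≤ ·) c) : InjOn rk c :=
  fun _ ha _ hb h =>
    le_antisymm (hK.le_of_rk_le_of_isChain hc ha hb h.le) (hK.le_of_rk_le_of_isChain hc hb ha h.ge)

theorem exists_mem_rk_eq {Φ : Set α} (hΦ : IsMaxChain (· ≤ ·) Φ) {i : ℤ}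
    (hi : i ∈ Icc (-1) n) :
    ∃ a ∈ Φ, rk a = i :=
  hK.flag_rk Φ (isFlagOf_univ_iff.2 hΦ) i hi

theorem ncard_inter_Icc {Φ : Set α} (hΦ : IsMaxChain (· ≤ ·) Φ) {a b : α}
    (ha : a ∈ Φ) (hb : b ∈ Φ) : (Φ ∩ Icc a b).ncard = (rk b + 1 - rk a).toNat := by
  have hbij : BijOn rk (Φ ∩ Icc a b) (Icc (rk a) (rk b)) := by
    refine ⟨fun c hc => ⟨hK.strictMono.monotone hc.2.1, hK.strictMono.monotone hc.2.2⟩,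
      (hK.injOn_rk_of_isChain hΦ.1).mono inter_subset_left, fun i hi => ?_⟩
    obtain ⟨c, hc, rfl⟩ := hK.exists_mem_rk_eq hΦ
      ⟨(hK.rk_mem_Icc a).1.trans hi.1, hi.2.trans (hK.rk_mem_Icc b).2⟩
    exact ⟨c, ⟨hc, hK.le_of_rk_le_of_isChain hΦ.1 ha hc hi.1,
      hK.le_of_rk_le_of_isChain hΦ.1 hc hb hi.2⟩, rfl⟩
  rw [hbij.ncard_eq, ← Finset.coe_Icc, ncard_coe_finset, Int.card_Icc]

theorem rk_map (g : α ≃o α) (a : α) : rk (g a) = rk a := by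
  obtain ⟨Φ, haΦ, hΦ, -⟩ := hK.chain_flag {a} IsChain.singleton
  replace hΦ := isFlagOf_univ_iff.1 hΦ
  have hgΦ : IsMaxChain (· ≤ ·) (g '' Φ) := hΦ.image g
  have hcard := hK.ncard_inter_Icc hgΦ hgΦ.bot_mem (mem_image_of_mem g (haΦ rfl))
  rw [← map_bot g, ← g.image_Icc, ← image_inter g.injective, g.injective.injOn.ncard_image,
    hK.ncard_inter_Icc hΦ hΦ.bot_mem (haΦ rfl), map_bot] at hcard
  have := (hK.rk_mem_Icc a).1
  have := (hK.rk_mem_Icc (g a)).1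
  have := hK.rk_bot
  omega

theorem map_eq_of_rk_eq (g : α ≃o α) {Φ Ψ : Set α} (hΨ : IsMaxChain (· ≤ ·) Ψ)
    (hg : g '' Φ = Ψ) {a b : α} (ha : a ∈ Φ) (hb : b ∈ Ψ) (hab : rk a = rk b) : g a = b :=
  hK.injOn_rk_of_isChain hΨ.1 (hg ▸ mem_image_of_mem g ha) hb (by rw [hK.rk_map, hab])

theorem exists_isMaxChain_subset_preimage_val {F G : α} (hFG : F ≤ G) {c : Set (Icc F G)}
    (hc : IsChain (· ≤ ·) c) :
    ∃ Φ : Set α, IsMaxChain (· ≤ ·) Φ ∧ F ∈ Φ ∧ G ∈ Φ ∧ c ⊆ Subtype.val ⁻¹' Φ := by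
  have hmem : ∀ x ∈ Subtype.val '' c, x ∈ Icc F G := by
    rintro _ ⟨x, -, rfl⟩
    exact x.2
  have hchain : IsChain (· ≤ ·) (insert F (insert G (Subtype.val '' c))) := by
    refine ((hc.image (OrderEmbedding.subtype _)).insert
      fun x hx _ => Or.inr (hmem x hx).2).insert ?_
    rintro x (rfl | hx) _
    · exact Or.inl hFG
    · exact Or.inl (hmem x hx).1
  obtain ⟨Φ, hsub, hΦ, -⟩ := hK.chain_flag _ hchain
  exact ⟨Φ, isFlagOf_univ_iff.1 hΦ, hsub (mem_insert _ _),
    hsub (mem_insert_of_mem _ (mem_insert _ _)),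
    fun x hx => hsub (mem_insert_of_mem _ (mem_insert_of_mem _ (mem_image_of_mem _ hx)))⟩

theorem exists_isMaxChain_preimage_val_eq {F G : α} (hFG : F ≤ G) {Φ' : Set (Icc F G)}
    (hΦ' : IsMaxChain (· ≤ ·) Φ') :
    ∃ Φ : Set α, IsMaxChain (· ≤ ·) Φ ∧ F ∈ Φ ∧ G ∈ Φ ∧ Subtype.val ⁻¹' Φ = Φ' := by
  obtain ⟨Φ, hΦ, hF, hG, hsub⟩ := hK.exists_isMaxChain_subset_preimage_val hFG hΦ'.1
  exact ⟨Φ, hΦ, hF, hG, (hΦ'.2 (hΦ.preimage_val_Icc hF hG).1 hsub).symm⟩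

theorem icc {F G : α} (hFG : F ≤ G) :
    @IncComplex (Icc F G) _ (sectionBoundedOrder hFG)
      (rk G - rk F - 1) (fun x => rk x.1 - rk F - 1) := by
  let := sectionBoundedOrder hFG
  refine
    { rk_bot := show rk F - rk F - 1 = -1 by ring
      rk_top := rfl
      rk_strictMono := fun a b hab => by simpa using hK.strictMono (Subtype.coe_lt_coe.2 hab)
      chain_flag := fun c hc => ?chain_flag
      flag_rk := fun Φ' hΦ' i hi => ?flag_rk
      strong_conn := fun a b hab hrk =>
        ConnIn.of_val (hK.strong_conn a b hab (by simpa using hrk))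
      two_between := fun a b hab hrk => ?two_between }
  case chain_flag =>
    obtain ⟨Φ, hΦ, hF, hG, hsub⟩ := hK.exists_isMaxChain_subset_preimage_val hFG hc
    refine ⟨_, hsub, isFlagOf_univ_iff.2 (hΦ.preimage_val_Icc hF hG), ?_⟩
    rw [← preimage_inter_range, Subtype.range_coe,
      ncard_preimage_of_injective_subset_range Subtype.val_injective
        (inter_subset_right.trans Subtype.range_coe.superset),
      hK.ncard_inter_Icc hΦ hF hG]
    congr 1
    ring
  case flag_rk =>
    obtain ⟨Φ, hΦ, hF, hG, rfl⟩ :=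
      hK.exists_isMaxChain_preimage_val_eq hFG (isFlagOf_univ_iff.1 hΦ')
    obtain ⟨hi₁, hi₂⟩ := hi
    obtain ⟨hF₁, -⟩ := hK.rk_mem_Icc F
    obtain ⟨-, hG₂⟩ := hK.rk_mem_Icc G
    obtain ⟨a, ha, hrk⟩ := hK.exists_mem_rk_eq hΦ (i := i + rk F + 1) ⟨by omega, by omega⟩
    have hFa := hK.le_of_rk_le_of_isChain hΦ.1 hF ha (by omega)
    have haG := hK.le_of_rk_le_of_isChain hΦ.1 ha hG (by omega)
    exact ⟨⟨a, hFa, haG⟩, ha, by simp only [hrk]; ring⟩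
  case two_between =>
    obtain ⟨H, H', hne, haH, hHb, haH', hH'b⟩ := hK.two_between a b hab (by omega)
    exact ⟨⟨H, a.2.1.trans haH.le, hHb.le.trans b.2.2⟩,
      ⟨H', a.2.1.trans haH'.le, hH'b.le.trans b.2.2⟩, fun h => hne (congrArg Subtype.val h),
      haH, hHb, haH', hH'b⟩

theorem isRegularIC_Icc (hreg : IsRegularIC α) {F G : α} (hFG : F ≤ G) :
    IsRegularIC (Icc F G) := by
  intro Φ' Ψ' hΦ' hΨ'
  obtain ⟨Φ, hΦ, hFΦ, hGΦ, rfl⟩ :=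
    hK.exists_isMaxChain_preimage_val_eq hFG (isFlagOf_univ_iff.1 hΦ')
  obtain ⟨Ψ, hΨ, hFΨ, hGΨ, rfl⟩ :=
    hK.exists_isMaxChain_preimage_val_eq hFG (isFlagOf_univ_iff.1 hΨ')
  obtain ⟨g, hg⟩ := hreg Φ Ψ (isFlagOf_univ_iff.2 hΦ) (isFlagOf_univ_iff.2 hΨ)
  have hgF := hK.map_eq_of_rk_eq g hΨ hg hFΦ hFΨ rfl
  have hgG := hK.map_eq_of_rk_eq g hΨ hg hGΦ hGΨ rfl
  exact ⟨g.restrictIcc hgF hgG, by rw [g.image_restrictIcc_preimage_val, hg]⟩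

theorem nonempty_orderIso_Icc (hreg : IsRegularIC α) {F G F' G' : α} (hFG : F ≤ G)
    (hFG' : F' ≤ G') (hF : rk F' = rk F) (hG : rk G' = rk G) :
    Nonempty (Icc F G ≃o Icc F' G') := by
  obtain ⟨Φ, hsub, hΦ, -⟩ := hK.chain_flag {F, G} (IsChain.pair hFG)
  obtain ⟨Ψ, hsub', hΨ, -⟩ := hK.chain_flag {F', G'} (IsChain.pair hFG')
  obtain ⟨g, hg⟩ := hreg Φ Ψ hΦ hΨ
  replace hΨ := isFlagOf_univ_iff.1 hΨ
  have hgF := hK.map_eq_of_rk_eq g hΨ hg (hsub (mem_insert _ _)) (hsub' (mem_insert _ _)) hF.symm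
  have hgG := hK.map_eq_of_rk_eq g hΨ hg (hsub (mem_insert_of_mem _ rfl))
    (hsub' (mem_insert_of_mem _ rfl)) hG.symm
  exact ⟨g.restrictIcc hgF hgG⟩

end IncComplex

/-- Every section `G/F` of a regular incidence complex is itself a
regular incidence complex of rank `rk G - rk F - 1`, and any two sections defined
by faces of the same ranks are isomorphic. -/
theorem section_regular_and_isomorphic
    {α : Type*} [PartialOrder α] [BoundedOrder α] (n : ℤ) (rk : α → ℤ)
    (hK : IncComplex α n rk) (hreg : IsRegularIC α)
    (F G : α) (hFG : F ≤ G) :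
    (@IncComplex ↥(Set.Icc F G) _ (sectionBoundedOrder hFG)
        (rk G - rk F - 1) (fun x => rk x.1 - rk F - 1)) ∧
    IsRegularIC ↥(Set.Icc F G) ∧
    (∀ F' G' : α, F' ≤ G' → rk F' = rk F → rk G' = rk G →
      Nonempty (↥(Set.Icc F G) ≃o ↥(Set.Icc F' G'))) :=
  ⟨hK.icc hFG, hK.isRegularIC_Icc hreg hFG,
    fun _ _ hFG' hF hG => hK.nonempty_orderIso_Icc hreg hFG hFG' hF hG⟩
end

section
/- Let K be a regular incidence complex of rank n ≥ 1 with base flag Φ = {F_{-1}, F_0, ..., F_n}, and let Γ be a flag-transitive subgroup of Aut(K). For i ∈ {-1,0,...,n} let R_i be the stabilizer in Γ of Φ \ {F_i}. Then for every subset J of {-1,0,...,n}, the stabilizer in Γ of the subchain Φ_J = {F_j : j ∈ J} equals the subgroup generated by the R_j with j ∉ J. -/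
open Set Pointwise

/-!
Two flags containing a chain `C` are joined by adjacent flags containing `C`, by induction on the
number of ranks missing from `C`: take consecutive faces `c < c'` of `C` with a face of each flag
strictly between them, and connect these two faces either inside the strongly connected section
`(c, c')` or, when that section has rank one, by exchanging one for the other. Walking from the
base flag `Φ` to `g Φ` through flags containing `Φ_J`, each step is realised by an element of some
`R_i` with `i ∉ J`: automorphisms preserve rank, so one moving `Φ` to a flag that shares all faces
but `F_i` with it fixes those faces. The product of the steps agrees with `g` on `Φ`, hence differs
from `g` by an element of `R_{-1}`, the stabilizer of `Φ`.
-/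

section Flags

variable {α : Type*} [PartialOrder α]

lemma IsFlagOf.image {Φ : Set α} (hΦ : IsFlagOf univ Φ) (g : α ≃o α) :
    IsFlagOf univ (g '' Φ) := by
  refine ⟨subset_univ _, hΦ.2.1.image g, fun Ψ _ hΨ hsub => ?_⟩
  have : g.symm '' Ψ = Φ := hΦ.2.2 _ (subset_univ _) (hΨ.image g.symm) <| by
    rw [← g.symm_image_image Φ]; exact image_mono hsub
  rw [← this, g.image_symm_image]

lemma IsFlagOf.bot_mem [OrderBot α] {Φ : Set α} (hΦ : IsFlagOf univ Φ) : ⊥ ∈ Φ :=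
  hΦ.2.2 (insert ⊥ Φ) (subset_univ _) (hΦ.2.1.insert fun _ _ _ => Or.inl bot_le)
    (subset_insert _ _) ▸ mem_insert _ _

lemma IsFlagOf.top_mem [OrderTop α] {Φ : Set α} (hΦ : IsFlagOf univ Φ) : ⊤ ∈ Φ :=
  hΦ.2.2 (insert ⊤ Φ) (subset_univ _) (hΦ.2.1.insert fun _ _ _ => Or.inr le_top)
    (subset_insert _ _) ▸ mem_insert _ _

lemma FlagAdj.image {A B : Set α} (h : FlagAdj A B) (g : α ≃o α) : FlagAdj (g '' A) (g '' B) := by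
  simpa only [FlagAdj, ← image_sdiff g.injective, ncard_image_of_injective _ g.injective] using h

def FlagAdjOver (C A B : Set α) : Prop :=
  IsFlagOf univ A ∧ IsFlagOf univ B ∧ C ⊆ A ∧ C ⊆ B ∧ FlagAdj A B

lemma FlagAdjOver.mono {C C' A B : Set α} (h : FlagAdjOver C' A B) (hC : C ⊆ C') :
    FlagAdjOver C A B :=
  ⟨h.1, h.2.1, hC.trans h.2.2.1, hC.trans h.2.2.2.1, h.2.2.2.2⟩

section Gap

variable {C : Set α} {c c' x : α}

lemma notMem_of_mem_Ioo_of_gap (hgap : ∀ z ∈ C, z ≤ c ∨ c' ≤ z) (hx : x ∈ Ioo c c') : x ∉ C :=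
  fun hxC => (hgap x hxC).elim (hx.1.not_ge) (hx.2.not_ge)

lemma IsChain.insert_of_mem_Ioo_of_gap (hC : IsChain (· ≤ ·) C)
    (hgap : ∀ z ∈ C, z ≤ c ∨ c' ≤ z) (hx : x ∈ Ioo c c') : IsChain (· ≤ ·) (insert x C) :=
  hC.insert fun z hz _ => (hgap z hz).elim (fun h => Or.inr (h.trans hx.1.le))
    (fun h => Or.inl (hx.2.le.trans h))

lemma exists_gap_of_notMem [BoundedOrder α] {a : α} (hCfin : C.Finite) (hbot : ⊥ ∈ C)
    (htop : ⊤ ∈ C) (ha : a ∉ C) (hCa : IsChain (· ≤ ·) (insert a C)) :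
    ∃ c ∈ C, ∃ c' ∈ C, c < a ∧ a < c' ∧ ∀ z ∈ C, z ≤ c ∨ c' ≤ z := by
  have hne : ∀ z ∈ C, z ≠ a := fun z hz h => ha (h ▸ hz)
  have hcomp : ∀ z ∈ C, ∀ w ∈ insert a C, z ≤ w ∨ w ≤ z := fun z hz w hw =>
    hCa.total (mem_insert_of_mem _ hz) hw
  obtain ⟨c, ⟨hcC, hca⟩, hcmax⟩ := (hCfin.subset (sep_subset C (· < a))).exists_maximal
    ⟨⊥, hbot, bot_le.lt_of_ne (hne ⊥ hbot)⟩
  obtain ⟨c', ⟨hc'C, hac'⟩, hc'min⟩ := (hCfin.subset (sep_subset C (a < ·))).exists_minimal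
    ⟨⊤, htop, le_top.lt_of_ne (hne ⊤ htop).symm⟩
  refine ⟨c, hcC, c', hc'C, hca, hac', fun z hz => ?_⟩
  rcases (hcomp z hz a (mem_insert _ _)).imp (·.lt_of_ne (hne z hz))
      (·.lt_of_ne (hne z hz).symm) with hza | haz
  · exact Or.inl ((hcomp z hz c (mem_insert_of_mem _ hcC)).elim id (hcmax ⟨hz, hza⟩))
  · exact Or.inr ((hcomp z hz c' (mem_insert_of_mem _ hc'C)).elim (hc'min ⟨hz, haz⟩) id)

end Gap

end Flags

namespace IncComplex

open Relation

variable {α : Type*} [PartialOrder α] [BoundedOrder α] {n : ℤ} {rk : α → ℤ}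

lemma strictMono_s2 (hK : IncComplex α n rk) : StrictMono rk :=
  fun a b h => hK.rk_strictMono a b h

lemma rk_mem (hK : IncComplex α n rk) (a : α) : rk a ∈ Icc (-1) n :=
  ⟨hK.rk_bot ▸ hK.strictMono_s2.monotone bot_le, hK.rk_top ▸ hK.strictMono_s2.monotone le_top⟩

lemma eq_bot_of_rk_eq (hK : IncComplex α n rk) {a : α} (ha : rk a = -1) : a = ⊥ := by
  by_contra hne
  have := hK.strictMono_s2 (bot_lt_iff_ne_bot.2 hne)
  rw [hK.rk_bot, ha] at this
  exact this.false

section Chain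

variable {Λ : Set α} {x y : α}

lemma le_of_rk_le (hK : IncComplex α n rk) (hΛ : IsChain (· ≤ ·) Λ) (hx : x ∈ Λ) (hy : y ∈ Λ)
    (h : rk x ≤ rk y) : x ≤ y := by
  rcases eq_or_ne x y with rfl | hne
  · rfl
  exact (hΛ hx hy hne).resolve_right fun hyx => (hK.strictMono_s2 (hyx.lt_of_ne hne.symm)).not_ge h

lemma lt_of_rk_lt (hK : IncComplex α n rk) (hΛ : IsChain (· ≤ ·) Λ) (hx : x ∈ Λ) (hy : y ∈ Λ)
    (h : rk x < rk y) : x < y :=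
  (hK.le_of_rk_le hΛ hx hy h.le).lt_of_ne fun e => h.ne (congrArg rk e)

lemma rk_injOn (hK : IncComplex α n rk) (hΛ : IsChain (· ≤ ·) Λ) : InjOn rk Λ :=
  fun _ hx _ hy h => (hK.le_of_rk_le hΛ hx hy h.le).antisymm (hK.le_of_rk_le hΛ hy hx h.ge)

lemma finite_of_isChain (hK : IncComplex α n rk) (hΛ : IsChain (· ≤ ·) Λ) : Λ.Finite :=
  Finite.of_finite_image ((finite_Icc (-1) n).subset (image_subset_iff.2 fun a _ => hK.rk_mem a))
    (hK.rk_injOn hΛ)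

lemma ncard_le_of_isChain (hK : IncComplex α n rk) (hΛ : IsChain (· ≤ ·) Λ) :
    Λ.ncard ≤ (n + 2).toNat := by
  rw [← (hK.rk_injOn hΛ).ncard_image]
  calc (rk '' Λ).ncard ≤ (Icc (-1) n).ncard :=
        ncard_le_ncard (image_subset_iff.2 fun a _ => hK.rk_mem a) (finite_Icc _ _)
    _ = (n + 2).toNat := by
        rw [← Finset.coe_Icc, ncard_coe_finset, Int.card_Icc, sub_neg_eq_add, add_assoc]; rfl

lemma ncard_of_isFlagOf (hK : IncComplex α n rk) (hΛ : IsFlagOf univ Λ) :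
    Λ.ncard = (n + 2).toNat := by
  obtain ⟨Ψ, hΛΨ, hΨ, hcard⟩ := hK.chain_flag Λ hΛ.2.1
  rwa [hΛ.2.2 Ψ (subset_univ _) hΨ.2.1 hΛΨ] at hcard

lemma isFlagOf_of_ncard (hK : IncComplex α n rk) (hΛ : IsChain (· ≤ ·) Λ)
    (hcard : Λ.ncard = (n + 2).toNat) : IsFlagOf univ Λ :=
  ⟨subset_univ _, hΛ, fun _ _ hΨ hsub => (eq_of_subset_of_ncard_le hsub
    (hcard ▸ hK.ncard_le_of_isChain hΨ) (hK.finite_of_isChain hΨ)).symm⟩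

end Chain

lemma ncard_inter_Iio (hK : IncComplex α n rk) {Φ : Set α} (hΦ : IsFlagOf univ Φ) {a : α}
    (ha : a ∈ Φ) : (Φ ∩ Iio a).ncard = (rk a + 1).toNat := by
  have himage : rk '' (Φ ∩ Iio a) = Ico (-1) (rk a) := by
    ext i
    constructor
    · rintro ⟨x, ⟨-, hxa⟩, rfl⟩
      exact ⟨(hK.rk_mem x).1, hK.strictMono_s2 hxa⟩
    · rintro ⟨hi, hia⟩
      obtain ⟨x, hx, rfl⟩ := hK.flag_rk Φ hΦ i ⟨hi, hia.le.trans (hK.rk_mem a).2⟩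
      exact ⟨x, ⟨hx, hK.lt_of_rk_lt hΦ.2.1 hx ha hia⟩, rfl⟩
  rw [← ((hK.rk_injOn hΦ.2.1).mono inter_subset_left).ncard_image, himage,
    ← Finset.coe_Ico, ncard_coe_finset, Int.card_Ico, sub_neg_eq_add]

/-- `g` maps a flag through `a` to a flag through `g a`, with as many faces below. -/
lemma rk_apply (hK : IncComplex α n rk) (g : α ≃o α) (a : α) : rk (g a) = rk a := by
  obtain ⟨Φ, ha, hΦ, -⟩ := hK.chain_flag {a} IsChain.singleton
  have h := hK.ncard_inter_Iio (hΦ.image g) (mem_image_of_mem g (ha rfl))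
  rw [← g.image_Iio, ← image_inter g.injective, ncard_image_of_injective _ g.injective,
    hK.ncard_inter_Iio hΦ (ha rfl)] at h
  have := (hK.rk_mem a).1
  have := (hK.rk_mem (g a)).1
  omega

lemma apply_eq_of_mem (hK : IncComplex α n rk) {Λ : Set α} (hΛ : IsChain (· ≤ ·) Λ)
    (g : α ≃o α) {a : α} (ha : a ∈ Λ) (hga : g a ∈ Λ) : g a = a :=
  hK.rk_injOn hΛ hga ha (hK.rk_apply g a)

lemma exchange (hK : IncComplex α n rk) {Φ : Set α} (hΦ : IsFlagOf univ Φ) {c c' A B : α}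
    (hc : c ∈ Φ) (hc' : c' ∈ Φ) (hrk : rk c' = rk c + 2) (hAΦ : A ∈ Φ) (hA : A ∈ Ioo c c')
    (hB : B ∈ Ioo c c') (hAB : A ≠ B) :
    IsFlagOf univ (insert B (Φ \ {A})) ∧ FlagAdj Φ (insert B (Φ \ {A})) := by
  have hrkA : rk A = rk c + 1 := by
    have := hK.strictMono_s2 hA.1; have := hK.strictMono_s2 hA.2; omega
  have hrkB : rk B = rk c + 1 := by
    have := hK.strictMono_s2 hB.1; have := hK.strictMono_s2 hB.2; omega
  have hBΦ : B ∉ Φ := fun h => hAB (hK.rk_injOn hΦ.2.1 hAΦ h (hrkA.trans hrkB.symm))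
  have hchain : IsChain (· ≤ ·) (insert B (Φ \ {A})) := by
    refine (hΦ.2.1.mono sdiff_subset).insert fun z ⟨hzΦ, hzA⟩ _ => ?_
    have hrkz : rk z ≠ rk A := fun h => hzA (hK.rk_injOn hΦ.2.1 hzΦ hAΦ h)
    rcases le_or_gt (rk z) (rk c) with h | h
    · exact Or.inr ((hK.le_of_rk_le hΦ.2.1 hzΦ hc h).trans hB.1.le)
    · exact Or.inl (hB.2.le.trans (hK.le_of_rk_le hΦ.2.1 hc' hzΦ (by omega)))
  refine ⟨hK.isFlagOf_of_ncard hchain (by rw [ncard_exchange hBΦ hAΦ, hK.ncard_of_isFlagOf hΦ]),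
    ?_, ?_⟩
  · convert ncard_singleton A
    ext z
    simp only [mem_sdiff, mem_insert_iff, mem_singleton_iff, not_or, not_and, not_not]
    exact ⟨fun h => h.2.2 h.1, by rintro rfl; exact ⟨hAΦ, hAB, fun _ => rfl⟩⟩
  · convert ncard_singleton B
    ext z
    simp only [mem_sdiff, mem_insert_iff, mem_singleton_iff]
    exact ⟨fun h => h.1.resolve_right fun h' => h.2 h'.1, by rintro rfl; exact ⟨Or.inl rfl, hBΦ⟩⟩

lemma reflTransGen_of_mem_Ioo (hK : IncComplex α n rk) {C : Set α} (hC : IsChain (· ≤ ·) C)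
    {c c' : α} (hc : c ∈ C) (hc' : c' ∈ C) (hgap : ∀ z ∈ C, z ≤ c ∨ c' ≤ z)
    (ih : ∀ x ∈ Ioo c c', ∀ Φ Ψ, IsFlagOf univ Φ → IsFlagOf univ Ψ → insert x C ⊆ Φ →
      insert x C ⊆ Ψ → ReflTransGen (FlagAdjOver C) Φ Ψ)
    {x y : α} (hx : x ∈ Ioo c c') (hy : y ∈ Ioo c c') {Φ : Set α} (hΦ : IsFlagOf univ Φ)
    (hxΦ : insert x C ⊆ Φ) :
    ∀ Ψ, IsFlagOf univ Ψ → insert y C ⊆ Ψ → ReflTransGen (FlagAdjOver C) Φ Ψ := by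
  have hstep : ∀ b ∈ Ioo c c', ∀ d ∈ Ioo c c', b ≤ d ∨ d ≤ b →
      (∀ Ψ, IsFlagOf univ Ψ → insert b C ⊆ Ψ → ReflTransGen (FlagAdjOver C) Φ Ψ) →
      ∀ Ψ, IsFlagOf univ Ψ → insert d C ⊆ Ψ → ReflTransGen (FlagAdjOver C) Φ Ψ := by
    intro b hb d hd hbd hreach Ψ hΨ hdΨ
    have hchain : IsChain (· ≤ ·) (insert b (insert d C)) :=
      (hC.insert_of_mem_Ioo_of_gap hgap hd).insert fun z hz _ =>
        hz.elim (fun h => h ▸ hbd) fun hz =>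
          (hC.insert_of_mem_Ioo_of_gap hgap hb).total (mem_insert _ _) (mem_insert_of_mem _ hz)
    obtain ⟨N, hsub, hN, -⟩ := hK.chain_flag _ hchain
    have hdN : insert d C ⊆ N := (subset_insert _ _).trans hsub
    have hbN : insert b C ⊆ N :=
      insert_subset (hsub (mem_insert _ _)) ((subset_insert _ _).trans hdN)
    exact (hreach N hN hbN).trans (ih d hd N Ψ hN hΨ hdN hdΨ)
  by_cases hwide : 2 ≤ rk c' - rk c - 1
  · induction hK.strong_conn c c' (hx.1.trans hx.2).le hwide x y hx.1 hx.2 hy.1 hy.2 with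
    | refl => exact fun Ψ hΨ hxΨ => ih x hx Φ Ψ hΦ hΨ hxΦ hxΨ
    | tail _ hbd hreach =>
      exact hstep _ ⟨hbd.1, hbd.2.1⟩ _ ⟨hbd.2.2.1, hbd.2.2.2.1⟩ hbd.2.2.2.2
        (hreach ⟨hbd.1, hbd.2.1⟩)
  intro Ψ hΨ hyΨ
  rcases eq_or_ne x y with rfl | hxy
  · exact ih x hx Φ Ψ hΦ hΨ hxΦ hyΨ
  have hrk : rk c' = rk c + 2 := by
    have := hK.strictMono_s2 hx.1; have := hK.strictMono_s2 hx.2; omega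
  obtain ⟨hΦ', hadj⟩ := hK.exchange hΦ (hxΦ (mem_insert_of_mem _ hc))
    (hxΦ (mem_insert_of_mem _ hc')) hrk (hxΦ (mem_insert _ _)) hx hy hxy
  have hyΦ' : insert y C ⊆ insert y (Φ \ {x}) := insert_subset_insert
    (subset_sdiff_singleton ((subset_insert _ _).trans hxΦ) (notMem_of_mem_Ioo_of_gap hgap hx))
  exact .head ⟨hΦ, hΦ', (subset_insert _ _).trans hxΦ, (subset_insert _ _).trans hyΦ', hadj⟩
    (ih y hy _ Ψ hΦ' hΨ hyΦ' hyΨ)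

lemma reflTransGen_flagAdjOver_of_bot_mem_of_top_mem (hK : IncComplex α n rk) {C : Set α}
    (hC : IsChain (· ≤ ·) C) (hbot : ⊥ ∈ C) (htop : ⊤ ∈ C) {Φ Ψ : Set α}
    (hΦ : IsFlagOf univ Φ) (hΨ : IsFlagOf univ Ψ) (hCΦ : C ⊆ Φ) (hCΨ : C ⊆ Ψ) :
    ReflTransGen (FlagAdjOver C) Φ Ψ := by
  induction hk : (n + 2).toNat - C.ncard using Nat.strong_induction_on generalizing C Φ Ψ with
  | _ k ihk =>
  rcases eq_or_ne C Φ with rfl | hCΦne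
  · rw [hΦ.2.2 Ψ (subset_univ _) hΨ.2.1 hCΨ]
  have hCΦlt : C ⊂ Φ := hCΦ.ssubset_of_ne hCΦne
  obtain ⟨a, haΦ, haC⟩ := exists_of_ssubset hCΦlt
  obtain ⟨c, hc, c', hc', hca, hac', hgap⟩ := exists_gap_of_notMem (hK.finite_of_isChain hC)
    hbot htop haC (hΦ.2.1.mono (insert_subset haΦ hCΦ))
  obtain ⟨b, hbΨ, hrkb⟩ := hK.flag_rk Ψ hΨ (rk a) (hK.rk_mem a)
  have hb : b ∈ Ioo c c' :=
    ⟨hK.lt_of_rk_lt hΨ.2.1 (hCΨ hc) hbΨ (hrkb ▸ hK.strictMono_s2 hca),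
      hK.lt_of_rk_lt hΨ.2.1 hbΨ (hCΨ hc') (hrkb ▸ hK.strictMono_s2 hac')⟩
  have hCcard : C.ncard < (n + 2).toNat :=
    hK.ncard_of_isFlagOf hΦ ▸ ncard_lt_ncard hCΦlt (hK.finite_of_isChain hΦ.2.1)
  refine hK.reflTransGen_of_mem_Ioo hC hc hc' hgap (fun x hx Φ' Ψ' hΦ' hΨ' hxΦ' hxΨ' => ?_)
    ⟨hca, hac'⟩ hb hΦ (insert_subset haΦ hCΦ) Ψ hΨ (insert_subset hbΨ hCΨ)
  have hxcard : (insert x C).ncard = C.ncard + 1 :=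
    ncard_insert_of_notMem (notMem_of_mem_Ioo_of_gap hgap hx) (hK.finite_of_isChain hC)
  exact ReflTransGen.mono (fun _ _ h => h.mono (subset_insert _ _))
    _ _ (ihk _ (by omega) (hC.insert_of_mem_Ioo_of_gap hgap hx) (mem_insert_of_mem _ hbot)
      (mem_insert_of_mem _ htop) hΦ' hΨ' hxΦ' hxΨ' rfl)

theorem reflTransGen_flagAdjOver (hK : IncComplex α n rk) {C : Set α}
    (hC : IsChain (· ≤ ·) C) {Φ Ψ : Set α} (hΦ : IsFlagOf univ Φ) (hΨ : IsFlagOf univ Ψ)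
    (hCΦ : C ⊆ Φ) (hCΨ : C ⊆ Ψ) : ReflTransGen (FlagAdjOver C) Φ Ψ :=
  ReflTransGen.mono (fun _ _ h => h.mono ((subset_insert _ _).trans (subset_insert _ _))) _ _
    (hK.reflTransGen_flagAdjOver_of_bot_mem_of_top_mem
      ((hC.insert fun _ _ _ => Or.inr le_top).insert fun _ _ _ => Or.inl bot_le)
      (mem_insert _ _) (mem_insert_of_mem _ (mem_insert _ _)) hΦ hΨ
      (insert_subset hΦ.bot_mem (insert_subset hΦ.top_mem hCΦ))
      (insert_subset hΨ.bot_mem (insert_subset hΨ.top_mem hCΨ)))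

section BaseFlag

variable {Γ : Subgroup (α ≃o α)} {F : ℤ → α}

def subchainGens (Γ : Subgroup (α ≃o α)) (F : ℤ → α) (n : ℤ) (J : Set ℤ) : Set (α ≃o α) :=
  Rset Γ F n (-1) ∪ ⋃ j ∈ Icc (-1 : ℤ) n \ J, Rset Γ F n j

lemma closure_subchainGens_le (hK : IncComplex α n rk)
    (hFrk : ∀ i ∈ Icc (-1 : ℤ) n, rk (F i) = i) {J : Set ℤ} (hJ : J ⊆ Icc (-1 : ℤ) n) :
    Subgroup.closure (subchainGens Γ F n J) ≤ Γ ⊓ fixingSubgroup (α ≃o α) (F '' J) := by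
  have hbot : F (-1) = ⊥ := hK.eq_bot_of_rk_eq (hFrk (-1) ⟨le_rfl, hK.rk_bot ▸ (hK.rk_mem ⊥).2⟩)
  rw [Subgroup.closure_le]
  rintro g (hg | hg)
  · refine ⟨hg.1, (mem_fixingSubgroup_iff _).2 (forall_mem_image.2 fun j hj => ?_)⟩
    rcases eq_or_ne j (-1) with rfl | hj1
    · exact hbot ▸ g.map_bot
    · exact hg.2 j (hJ hj) hj1
  · obtain ⟨i, ⟨-, hiJ⟩, hg⟩ := mem_iUnion₂.1 hg
    exact ⟨hg.1, (mem_fixingSubgroup_iff _).2 (forall_mem_image.2 fun j hj =>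
      hg.2 j (hJ hj) (ne_of_mem_of_not_mem hj hiJ))⟩

lemma mem_Rset_of_image_eq (hK : IncComplex α n rk)
    (hFflag : IsFlagOf univ (F '' Icc (-1 : ℤ) n)) {g : α ≃o α} (hg : g ∈ Γ)
    (hgΦ : g '' (F '' Icc (-1 : ℤ) n) = F '' Icc (-1 : ℤ) n) (i : ℤ) : g ∈ Rset Γ F n i :=
  ⟨hg, fun j hj _ => hK.apply_eq_of_mem hFflag.2.1 g ⟨j, hj, rfl⟩ (hgΦ ▸ ⟨F j, ⟨j, hj, rfl⟩, rfl⟩)⟩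

lemma exists_mem_Rset_of_flagAdj (hK : IncComplex α n rk)
    (hFrk : ∀ i ∈ Icc (-1 : ℤ) n, rk (F i) = i) {Λ : Set α} (hΛ : IsFlagOf univ Λ)
    (hadj : FlagAdj (F '' Icc (-1 : ℤ) n) Λ) {r : α ≃o α} (hr : r ∈ Γ)
    (hrΛ : r '' (F '' Icc (-1 : ℤ) n) = Λ) : ∃ i ∈ Icc (-1 : ℤ) n, F i ∉ Λ ∧ r ∈ Rset Γ F n i := by
  obtain ⟨x, hx⟩ := ncard_eq_one.1 hadj.1
  obtain ⟨⟨i, hi, rfl⟩, hiΛ⟩ : x ∈ F '' Icc (-1 : ℤ) n \ Λ := hx ▸ mem_singleton x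
  refine ⟨i, hi, hiΛ, hr, fun j hj hji =>
    hK.apply_eq_of_mem hΛ.2.1 r ?_ (hrΛ ▸ ⟨F j, ⟨j, hj, rfl⟩, rfl⟩)⟩
  by_contra hjΛ
  have hFji : F j ∈ F '' Icc (-1 : ℤ) n \ Λ := ⟨⟨j, hj, rfl⟩, hjΛ⟩
  rw [hx, mem_singleton_iff] at hFji
  exact hji (by rw [← hFrk j hj, hFji, hFrk i hi])

lemma exists_mem_closure_image_eq (hK : IncComplex α n rk) (hΓ : FlagTrans Γ)
    (hFflag : IsFlagOf univ (F '' Icc (-1 : ℤ) n)) (hFrk : ∀ i ∈ Icc (-1 : ℤ) n, rk (F i) = i)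
    {J : Set ℤ} (hJ : J ⊆ Icc (-1 : ℤ) n) {Ψ : Set α}
    (hΨ : ReflTransGen (FlagAdjOver (F '' J)) (F '' Icc (-1 : ℤ) n) Ψ) :
    ∃ h ∈ Subgroup.closure (subchainGens Γ F n J), h '' (F '' Icc (-1 : ℤ) n) = Ψ := by
  induction hΨ with
  | refl => exact ⟨1, one_mem _, image_id _⟩
  | @tail Ψ₁ Ψ₂ _ hadj ih =>
    obtain ⟨h, hh, hhΦ⟩ := ih
    obtain ⟨-, hΨ₂, -, hJΨ₂, hadj⟩ := hadj
    have hΦΛ : FlagAdj (F '' Icc (-1 : ℤ) n) (⇑h⁻¹ '' Ψ₂) := by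
      simpa only [← hhΦ, image_image, RelIso.inv_apply_self, image_id'] using hadj.image h⁻¹
    obtain ⟨r, hr, hrΛ⟩ := hΓ _ _ hFflag (hΨ₂.image h⁻¹)
    obtain ⟨i, hi, hiΛ, hri⟩ := hK.exists_mem_Rset_of_flagAdj hFrk (hΨ₂.image h⁻¹) hΦΛ hr hrΛ
    have hiJ : i ∉ J := fun hiJ => hiΛ ⟨F i, hJΨ₂ (mem_image_of_mem F hiJ),
      (mem_fixingSubgroup_iff _).1 (inv_mem (hK.closure_subchainGens_le hFrk hJ hh).2) _
        (mem_image_of_mem F hiJ)⟩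
    have hrS : r ∈ subchainGens Γ F n J := Or.inr (mem_iUnion₂.2 ⟨i, ⟨hi, hiJ⟩, hri⟩)
    refine ⟨h * r, mul_mem hh (Subgroup.subset_closure hrS), ?_⟩
    rw [RelIso.coe_mul, image_comp, hrΛ, image_image]
    simp

end BaseFlag

end IncComplex

theorem stabilizer_of_subchain_eq_closure_general
    {α : Type*} [PartialOrder α] [BoundedOrder α] (n : ℤ) (rk : α → ℤ)
    (hK : IncComplex α n rk)
    (Γ : Subgroup (α ≃o α)) (hΓ : FlagTrans Γ)
    (F : ℤ → α) (hFflag : IsFlagOf Set.univ (F '' Set.Icc (-1 : ℤ) n))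
    (hFrk : ∀ i ∈ Set.Icc (-1 : ℤ) n, rk (F i) = i)
    (J : Set ℤ) (hJ : J ⊆ Set.Icc (-1 : ℤ) n) :
    {g : α ≃o α | g ∈ Γ ∧ ∀ j ∈ J, g (F j) = F j} =
      ↑(Subgroup.closure
        (Rset Γ F n (-1) ∪ ⋃ j ∈ Set.Icc (-1 : ℤ) n \ J, Rset Γ F n j)) := by
  have hS := hK.closure_subchainGens_le (Γ := Γ) hFrk hJ
  ext g
  constructor
  · rintro ⟨hgΓ, hgJ⟩
    have hJΦ : F '' J ⊆ F '' Icc (-1 : ℤ) n := image_mono hJ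
    have hJgΦ : F '' J ⊆ g '' (F '' Icc (-1 : ℤ) n) :=
      forall_mem_image.2 fun j hj => ⟨F j, hJΦ (mem_image_of_mem F hj), hgJ j hj⟩
    obtain ⟨h, hh, hhg⟩ := hK.exists_mem_closure_image_eq hΓ hFflag hFrk hJ
      (hK.reflTransGen_flagAdjOver (hFflag.2.1.mono hJΦ) hFflag (hFflag.image g) hJΦ hJgΦ)
    have hstab : h⁻¹ * g ∈ Rset Γ F n (-1) :=
      hK.mem_Rset_of_image_eq hFflag (mul_mem (inv_mem (hS hh).1) hgΓ) (by
        rw [RelIso.coe_mul, image_comp, ← hhg, image_image]; simp) _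
    have := mul_mem hh (Subgroup.subset_closure (Or.inl hstab))
    rwa [mul_inv_cancel_left] at this
  · intro hg
    exact ⟨(hS hg).1, fun j hj => (mem_fixingSubgroup_iff _).1 (hS hg).2 _ (mem_image_of_mem F hj)⟩

/-- the stabilizer in a flag-transitive group `Γ` of the subchain
`Φ_J` of the base flag is the subgroup generated by the `R_j` with `j ∉ J`
(with the convention that `R_{-1}` is always included, matching `Γ_∅ = R_{-1}`). -/
theorem stabilizer_of_subchain_eq_closure
    {α : Type*} [PartialOrder α] [BoundedOrder α] (n : ℤ) (rk : α → ℤ)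
    (hn : 1 ≤ n) (hK : IncComplex α n rk)
    (Γ : Subgroup (α ≃o α)) (hΓ : FlagTrans Γ)
    (F : ℤ → α) (hFflag : IsFlagOf Set.univ (F '' Set.Icc (-1 : ℤ) n))
    (hFrk : ∀ i ∈ Set.Icc (-1 : ℤ) n, rk (F i) = i)
    (J : Set ℤ) (hJ : J ⊆ Set.Icc (-1 : ℤ) n) :
    {g : α ≃o α | g ∈ Γ ∧ ∀ j ∈ J, g (F j) = F j} =
      ↑(Subgroup.closure
        (Rset Γ F n (-1) ∪ ⋃ j ∈ Set.Icc (-1 : ℤ) n \ J, Rset Γ F n j)) :=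
  stabilizer_of_subchain_eq_closure_general n rk hK Γ hΓ F hFflag hFrk J hJ
end
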